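/- arXiv:2410.09459 — 3 statements merged into one kernel-verified Lean document; each statement's English description precedes it below -/
import Mathlib

section
/- Let ρ, r ∈ (0,1), and define S₁(x) = ρx, S₂(x) = rx + ρ(1−r), S₃(x) = rx + (1−r). For any k ≥ 0 and any j, j' ∈ {0,1,…,k}, the compositions S₂^j ∘ S₁ ∘ S₃^{k−j} and S₂^{j'} ∘ S₁ ∘ S₃^{k−j'} are equal as maps ℝ → ℝ. -/
lemma aff_iter (a b : ℝ) (j : ℕ) (x : ℝ) :
    (fun x => a * x + b)^[j] x = a^j * x + b * ∑ i ∈ Finset.range j, a^i := by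
  induction j generalizing x with
  | zero => simp
  | succ n ih =>
      rw [Function.iterate_succ_apply, ih, Finset.sum_range_succ]
      ring

theorem stmt_1 (ρ r : ℝ) (hρ : ρ ∈ Set.Ioo (0:ℝ) 1) (hr : r ∈ Set.Ioo (0:ℝ) 1)
    (S₁ S₂ S₃ : ℝ → ℝ)
    (hS₁ : S₁ = fun x => ρ * x)
    (hS₂ : S₂ = fun x => r * x + ρ * (1 - r))
    (hS₃ : S₃ = fun x => r * x + (1 - r))
    (k j j' : ℕ) (hj : j ≤ k) (hj' : j' ≤ k) :
    (S₂^[j]) ∘ S₁ ∘ (S₃^[k - j]) = (S₂^[j']) ∘ S₁ ∘ (S₃^[k - j']) := by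
  have key : ∀ m, m ≤ k → (S₂^[m]) ∘ S₁ ∘ (S₃^[k - m]) =
      fun x => ρ * r^k * x + ρ * (1 - r) * ∑ i ∈ Finset.range k, r^i := by
    intro m hm
    funext x
    simp only [Function.comp_apply, hS₁, hS₂, hS₃]
    rw [aff_iter, aff_iter]
    have hsum : ∑ i ∈ Finset.range m, r^i + r^m * ∑ i ∈ Finset.range (k-m), r^i
        = ∑ i ∈ Finset.range k, r^i := by
      rw [Finset.mul_sum]
      simp_rw [← pow_add]
      rw [← Finset.sum_range_add_sum_Ico _ hm]
      congr 1
      rw [Finset.sum_Ico_eq_sum_range]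
    have hpow : r^m * r^(k-m) = r^k := by
      rw [← pow_add, Nat.add_sub_cancel' hm]
    rw [← hsum, ← hpow]
    ring
  rw [key j hj, key j' hj']
end

section
/- Let q ≥ 0, ρ, r ∈ (0,1), and p₁,…,p₅ > 0 with p₁+p₂+p₃ = 1, p₄+p₅ = 1. Define H(q,α) = (1 − p₄^q r^{−α})·[(1 − p₁^q ρ^{−α})(1 − p₃^q r^{−α}) − (p₁p₃ + p₂p₅)^q (ρ r)^{−α}] − p₂^q r^{−α} · p₄^q r^{−α} · p₅^q ρ^{−α}. Then for each fixed q ≥ 0 there exists α ∈ ℝ with H(q,α) = 0 in the region where p₁^q ρ^{−α} < 1, p₃^q r^{−α} < 1 and p₄^q r^{−α} < 1. -/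
open Real Filter

private lemma term_eq' (p x q α : ℝ) (hp : 0 < p) (hx : 0 < x) :
    p ^ q * x ^ (-α) = Real.exp (Real.log p * q - Real.log x * α) := by
  rw [Real.rpow_def_of_pos hp, Real.rpow_def_of_pos hx, ← Real.exp_add]
  congr 1; ring

private lemma term_lt_one' {p x q α : ℝ} (hp : 0 < p) (hx0 : 0 < x) (hx1 : x < 1)
    (hα : α < Real.log p * q / Real.log x) : p ^ q * x ^ (-α) < 1 := by
  have hlx : Real.log x < 0 := Real.log_neg hx0 hx1
  rw [term_eq' p x q α hp hx0]
  have h2 : Real.log p * q < α * Real.log x := (lt_div_iff_of_neg hlx).mp hα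
  have : Real.log p * q - Real.log x * α < 0 := by
    have := mul_comm α (Real.log x); linarith
  calc Real.exp (Real.log p * q - Real.log x * α) < Real.exp 0 :=
        Real.exp_lt_exp.mpr this
    _ = 1 := Real.exp_zero

private lemma term_le_one' {p x q α : ℝ} (hp : 0 < p) (hx0 : 0 < x) (hx1 : x < 1)
    (hα : α ≤ Real.log p * q / Real.log x) : p ^ q * x ^ (-α) ≤ 1 := by
  have hlx : Real.log x < 0 := Real.log_neg hx0 hx1
  rw [term_eq' p x q α hp hx0]
  have h2 : Real.log p * q ≤ α * Real.log x := (le_div_iff_of_neg hlx).mp hα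
  have : Real.log p * q - Real.log x * α ≤ 0 := by
    have := mul_comm α (Real.log x); linarith
  calc Real.exp (Real.log p * q - Real.log x * α) ≤ Real.exp 0 :=
        Real.exp_le_exp.mpr this
    _ = 1 := Real.exp_zero

private lemma term_eq_one' {p x q : ℝ} (hp : 0 < p) (hx0 : 0 < x) (hx1 : x < 1) :
    p ^ q * x ^ (-(Real.log p * q / Real.log x)) = 1 := by
  have hlx : Real.log x ≠ 0 := ne_of_lt (Real.log_neg hx0 hx1)
  rw [term_eq' _ _ _ _ hp hx0]
  have : Real.log p * q - Real.log x * (Real.log p * q / Real.log x) = 0 := by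
    field_simp; ring
  rw [this, Real.exp_zero]

private lemma Hneg' {A B C D E : ℝ} (hD : 0 < D) (hE : 0 < E)
    (hA : A ≤ 1) (hB : B ≤ 1) (hC : C ≤ 1) (h : A = 1 ∨ B = 1 ∨ C = 1) :
    (1 - A) * ((1 - B) * (1 - C) - D) - E < 0 := by
  rcases h with h | h | h <;> subst h <;>
    nlinarith [mul_nonneg (sub_nonneg.mpr hA) hD.le,
      mul_nonneg (sub_nonneg.mpr hB) hD.le,
      mul_nonneg (sub_nonneg.mpr hC) hD.le]

private lemma cont_term (x : ℝ) (hx : 0 < x) :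
    Continuous (fun α : ℝ => x ^ (-α)) := by
  have : (fun α : ℝ => x ^ (-α)) = fun α => Real.exp (Real.log x * (-α)) := by
    funext α; rw [Real.rpow_def_of_pos hx]
  rw [this]
  fun_prop

private lemma lim_term {x : ℝ} (hx0 : 0 < x) (hx1 : x < 1) :
    Tendsto (fun α : ℝ => x ^ (-α)) atBot (nhds 0) := by
  have hlog : 0 < -Real.log x := neg_pos.mpr (Real.log_neg hx0 hx1)
  have h1 : Tendsto (fun α : ℝ => Real.log x * (-α)) atBot atBot := by
    have heq : (fun α : ℝ => Real.log x * (-α)) = fun α => (-Real.log x) * α := by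
      funext α; ring
    rw [heq]
    exact Tendsto.const_mul_atBot hlog tendsto_id
  have := Real.tendsto_exp_atBot.comp h1
  have heq : (fun α : ℝ => x ^ (-α)) = fun α => Real.exp (Real.log x * (-α)) := by
    funext α; rw [Real.rpow_def_of_pos hx0]
  rw [heq]
  exact this

theorem stmt_11 (q ρ r p₁ p₂ p₃ p₄ p₅ : ℝ)
    (hq : 0 ≤ q) (hρ : ρ ∈ Set.Ioo (0:ℝ) 1) (hr : r ∈ Set.Ioo (0:ℝ) 1)
    (hp₁ : 0 < p₁) (hp₂ : 0 < p₂) (hp₃ : 0 < p₃) (hp₄ : 0 < p₄) (hp₅ : 0 < p₅)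
    (hsum₁ : p₁ + p₂ + p₃ = 1) (hsum₂ : p₄ + p₅ = 1)
    (H : ℝ → ℝ → ℝ)
    (hH : H = fun q α =>
      (1 - p₄ ^ q * r ^ (-α)) *
        ((1 - p₁ ^ q * ρ ^ (-α)) * (1 - p₃ ^ q * r ^ (-α)) -
          (p₁ * p₃ + p₂ * p₅) ^ q * (ρ * r) ^ (-α)) -
      p₂ ^ q * r ^ (-α) * (p₄ ^ q * r ^ (-α)) * (p₅ ^ q * ρ ^ (-α))) :
    ∃ α : ℝ, H q α = 0 ∧ p₁ ^ q * ρ ^ (-α) < 1 ∧ p₃ ^ q * r ^ (-α) < 1 ∧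
      p₄ ^ q * r ^ (-α) < 1 := by
  obtain ⟨hρ0, hρ1⟩ := hρ
  obtain ⟨hr0, hr1⟩ := hr
  subst hH
  set f : ℝ → ℝ := fun α =>
      (1 - p₄ ^ q * r ^ (-α)) *
        ((1 - p₁ ^ q * ρ ^ (-α)) * (1 - p₃ ^ q * r ^ (-α)) -
          (p₁ * p₃ + p₂ * p₅) ^ q * (ρ * r) ^ (-α)) -
      p₂ ^ q * r ^ (-α) * (p₄ ^ q * r ^ (-α)) * (p₅ ^ q * ρ ^ (-α)) with hf
  -- thresholds
  set T₁ : ℝ := Real.log p₁ * q / Real.log ρ with hT₁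
  set T₃ : ℝ := Real.log p₃ * q / Real.log r with hT₃
  set T₄ : ℝ := Real.log p₄ * q / Real.log r with hT₄
  set αs : ℝ := min T₁ (min T₃ T₄) with hαs
  have hαsT₁ : αs ≤ T₁ := min_le_left _ _
  have hαsT₃ : αs ≤ T₃ := le_trans (min_le_right _ _) (min_le_left _ _)
  have hαsT₄ : αs ≤ T₄ := le_trans (min_le_right _ _) (min_le_right _ _)
  have hρr0 : 0 < ρ * r := mul_pos hρ0 hr0
  have hmix : 0 < p₁ * p₃ + p₂ * p₅ := by positivity
  -- f αs < 0
  have hneg : f αs < 0 := by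
    have hA : p₄ ^ q * r ^ (-αs) ≤ 1 := term_le_one' hp₄ hr0 hr1 hαsT₄
    have hB : p₁ ^ q * ρ ^ (-αs) ≤ 1 := term_le_one' hp₁ hρ0 hρ1 hαsT₁
    have hC : p₃ ^ q * r ^ (-αs) ≤ 1 := term_le_one' hp₃ hr0 hr1 hαsT₃
    have hD : 0 < (p₁ * p₃ + p₂ * p₅) ^ q * (ρ * r) ^ (-αs) :=
      mul_pos (Real.rpow_pos_of_pos hmix q) (Real.rpow_pos_of_pos hρr0 _)
    have hE : 0 < p₂ ^ q * r ^ (-αs) * (p₄ ^ q * r ^ (-αs)) * (p₅ ^ q * ρ ^ (-αs)) := by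
      have h1 : 0 < p₂ ^ q * r ^ (-αs) :=
        mul_pos (Real.rpow_pos_of_pos hp₂ q) (Real.rpow_pos_of_pos hr0 _)
      have h2 : 0 < p₄ ^ q * r ^ (-αs) :=
        mul_pos (Real.rpow_pos_of_pos hp₄ q) (Real.rpow_pos_of_pos hr0 _)
      have h3 : 0 < p₅ ^ q * ρ ^ (-αs) :=
        mul_pos (Real.rpow_pos_of_pos hp₅ q) (Real.rpow_pos_of_pos hρ0 _)
      positivity
    have hone : p₄ ^ q * r ^ (-αs) = 1 ∨ p₁ ^ q * ρ ^ (-αs) = 1 ∨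
        p₃ ^ q * r ^ (-αs) = 1 := by
      rcases min_cases T₁ (min T₃ T₄) with ⟨h, _⟩ | ⟨h, _⟩
      · right; left; rw [hαs, h, hT₁]; exact term_eq_one' hp₁ hρ0 hρ1
      · rcases min_cases T₃ T₄ with ⟨h', _⟩ | ⟨h', _⟩
        · right; right; rw [hαs, h, h', hT₃]; exact term_eq_one' hp₃ hr0 hr1
        · left; rw [hαs, h, h', hT₄]; exact term_eq_one' hp₄ hr0 hr1
    exact Hneg' hD hE hA hB hC hone
  -- limit at -∞ is 1
  have tA : Tendsto (fun α : ℝ => p₄ ^ q * r ^ (-α)) atBot (nhds 0) := by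
    simpa using (lim_term hr0 hr1).const_mul (p₄ ^ q)
  have tB : Tendsto (fun α : ℝ => p₁ ^ q * ρ ^ (-α)) atBot (nhds 0) := by
    simpa using (lim_term hρ0 hρ1).const_mul (p₁ ^ q)
  have tC : Tendsto (fun α : ℝ => p₃ ^ q * r ^ (-α)) atBot (nhds 0) := by
    simpa using (lim_term hr0 hr1).const_mul (p₃ ^ q)
  have hρr1 : ρ * r < 1 := by nlinarith
  have tD : Tendsto (fun α : ℝ => (p₁ * p₃ + p₂ * p₅) ^ q * (ρ * r) ^ (-α)) atBot
      (nhds 0) := by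
    simpa using (lim_term hρr0 hρr1).const_mul ((p₁ * p₃ + p₂ * p₅) ^ q)
  have t2 : Tendsto (fun α : ℝ => p₂ ^ q * r ^ (-α)) atBot (nhds 0) := by
    simpa using (lim_term hr0 hr1).const_mul (p₂ ^ q)
  have t5 : Tendsto (fun α : ℝ => p₅ ^ q * ρ ^ (-α)) atBot (nhds 0) := by
    simpa using (lim_term hρ0 hρ1).const_mul (p₅ ^ q)
  have tone : Tendsto (fun _ : ℝ => (1:ℝ)) atBot (nhds 1) := tendsto_const_nhds
  have tH : Tendsto f atBot (nhds 1) := by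
    have := ((tone.sub tA).mul
        (((tone.sub tB).mul (tone.sub tC)).sub tD)).sub
        ((t2.mul tA).mul t5)
    simpa using this
  have h1 : ∀ᶠ α in atBot, 0 < f α :=
    tH.eventually (eventually_gt_nhds one_pos)
  have h2 : ∀ᶠ α in atBot, α < αs := eventually_lt_atBot αs
  obtain ⟨α₀, hfpos, hα₀lt⟩ := (h1.and h2).exists
  -- continuity
  have hcont : Continuous f := by
    apply Continuous.sub
    · apply Continuous.mul
      · exact continuous_const.sub (continuous_const.mul (cont_term r hr0))
      · apply Continuous.sub
        · exact ((continuous_const.sub (continuous_const.mul (cont_term ρ hρ0))).mul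
            (continuous_const.sub (continuous_const.mul (cont_term r hr0))))
        · exact continuous_const.mul (cont_term (ρ * r) hρr0)
    · exact (((continuous_const.mul (cont_term r hr0)).mul
        (continuous_const.mul (cont_term r hr0))).mul (continuous_const.mul (cont_term ρ hρ0)))
  -- IVT
  have hmem : (0 : ℝ) ∈ Set.Ioo (f αs) (f α₀) := ⟨hneg, hfpos⟩
  obtain ⟨c, hc, hfc⟩ := intermediate_value_Ioo' hα₀lt.le hcont.continuousOn hmem
  refine ⟨c, hfc, ?_, ?_, ?_⟩
  · exact term_lt_one' hp₁ hρ0 hρ1 (lt_of_lt_of_le hc.2 hαsT₁)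
  · exact term_lt_one' hp₃ hr0 hr1 (lt_of_lt_of_le hc.2 hαsT₃)
  · exact term_lt_one' hp₄ hr0 hr1 (lt_of_lt_of_le hc.2 hαsT₄)
end

section
/- Let A be an n×n nonnegative matrix whose entries are continuous, strictly increasing functions of a real parameter α, with each row sum tending to 0 as α → −∞ and to ∞ as α → +∞, and suppose A(α) is irreducible for all α. Then there is a unique α* ∈ ℝ such that the spectral radius (Perron–Frobenius eigenvalue) of A(α*) equals 1. -/
/-- The spectral radius of a real square matrix: the supremum of the absolute
values of its complex eigenvalues. -/
noncomputable def specRad {n : ℕ} (M : Matrix (Fin n) (Fin n) ℝ) : ℝ :=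
  sSup ((fun z : ℂ => ‖z‖) '' spectrum ℂ (M.map Complex.ofReal))

/-- A nonnegative matrix is irreducible if its directed graph is strongly
connected, i.e. for all `i j` some power has a positive `(i,j)` entry. -/
def MatIrreducible {n : ℕ} (M : Matrix (Fin n) (Fin n) ℝ) : Prop :=
  ∀ i j, ∃ m : ℕ, 0 < (M ^ (m + 1)) i j

/-!
For entrywise nonnegative matrices the spectral radius `ρ` is monotone in the entries, by Gelfand's
formula for the `ℓ∞` operator norm (itself monotone on nonnegative matrices), and it is positively
homogeneous. Strict monotonicity of the entries makes every `A α` entrywise positive, so for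
`t < 1 < t'` close to `1` the matrices `A β` with `β` near `α` lie between `t • A α` and `t' • A α`;
hence `α ↦ ρ (A α)` is continuous, and the same comparison makes it strictly increasing. Row sums
bound the spectral radius from both sides, so `ρ (A α)` is below `1` far to the left and above `1`
far to the right, and the intermediate value theorem gives the unique crossing.
-/

open Filter Topology
open scoped NNReal ENNReal

theorem spectrum.spectralRadius_smul {A : Type*} [NormedRing A] [NormedAlgebra ℂ A]
    [CompleteSpace A] [Nontrivial A] (c : ℂ) (a : A) :
    spectralRadius ℂ (c • a) = ‖c‖₊ * spectralRadius ℂ a := by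
  simp only [spectralRadius, spectrum.smul_eq_smul c a (spectrum.nonempty a), ← Set.image_smul,
    iSup_image, nnnorm_smul, ENNReal.coe_mul, ENNReal.mul_iSup]

namespace Matrix

section Order

variable {ι α : Type*} [Fintype ι] [DecidableEq ι] [Semiring α] [PartialOrder α] [IsOrderedRing α]

theorem pow_apply_le_pow_apply {M N : Matrix ι ι α} (hM : ∀ i j, 0 ≤ M i j)
    (h : ∀ i j, M i j ≤ N i j) (k : ℕ) (i j : ι) : (M ^ k) i j ≤ (N ^ k) i j := by
  induction k generalizing j with
  | zero => rfl
  | succ k ih =>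
    rw [pow_succ, pow_succ, mul_apply, mul_apply]
    exact Finset.sum_le_sum fun l _ =>
      mul_le_mul (ih l) (h l j) (hM l j) ((pow_apply_nonneg hM k i l).trans (ih l))

theorem pow_le_sum_pow_apply {M : Matrix ι ι α} (hM : ∀ i j, 0 ≤ M i j) {r : α} (hr : 0 ≤ r)
    (h : ∀ i, r ≤ ∑ j, M i j) (k : ℕ) (i : ι) : r ^ k ≤ ∑ j, (M ^ k) i j := by
  induction k generalizing i with
  | zero => simp [one_apply]
  | succ k ih =>
    calc r ^ (k + 1) = r * r ^ k := pow_succ' r k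
    _ ≤ (∑ l, M i l) * r ^ k := mul_le_mul_of_nonneg_right (h i) (pow_nonneg hr k)
    _ = ∑ l, M i l * r ^ k := Finset.sum_mul _ _ _
    _ ≤ ∑ l, M i l * ∑ j, (M ^ k) l j :=
      Finset.sum_le_sum fun l _ => mul_le_mul_of_nonneg_left (ih l) (hM i l)
    _ = ∑ j, (M ^ (k + 1)) i j := by
      simp only [pow_succ', mul_apply, Finset.mul_sum]
      exact Finset.sum_comm

end Order

theorem exists_one_lt_mul_le {ι : Type*} [Finite ι] {M N : Matrix ι ι ℝ}
    (h : ∀ i j, M i j < N i j) : ∃ t > 1, ∀ i j, t * M i j ≤ N i j := by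
  have hnear : ∀ᶠ t in 𝓝 (1 : ℝ), ∀ i j, t * M i j < N i j :=
    eventually_all.2 fun i => eventually_all.2 fun j =>
      (continuous_id.mul continuous_const).continuousAt.eventually_lt continuousAt_const
        (by simpa using h i j)
  obtain ⟨t, hMN, ht⟩ := ((hnear.filter_mono nhdsWithin_le_nhds).and
    (self_mem_nhdsWithin : ∀ᶠ t in 𝓝[>] (1 : ℝ), 1 < t)).exists
  exact ⟨t, ht, fun i j => (hMN i j).le⟩

section LinftyOp

attribute [local instance] Matrix.linftyOpNormedAddCommGroup Matrix.linftyOpNormedRing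
  Matrix.linftyOpNormedAlgebra Matrix.linfty_opNormOneClass

section Norm

variable {m n : Type*} [Fintype m] [Fintype n]

theorem linfty_opNorm_map_ofReal (M : Matrix m n ℝ) : ‖M.map Complex.ofReal‖ = ‖M‖ := by
  simp [linfty_opNorm_def, Complex.nnnorm_real]

theorem linfty_opNorm_le_of_le {M N : Matrix m n ℝ} (hM : ∀ i j, 0 ≤ M i j)
    (h : ∀ i j, M i j ≤ N i j) : ‖M‖ ≤ ‖N‖ := by
  rw [linfty_opNorm_def, linfty_opNorm_def, NNReal.coe_le_coe]
  refine Finset.sup_mono_fun fun i _ => Finset.sum_le_sum fun j _ => ?_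
  rw [← NNReal.coe_le_coe, coe_nnnorm, coe_nnnorm, Real.norm_of_nonneg (hM i j),
    Real.norm_of_nonneg ((hM i j).trans (h i j))]
  exact h i j

theorem sum_le_linfty_opNorm {M : Matrix m n ℝ} (hM : ∀ i j, 0 ≤ M i j) (i : m) :
    ∑ j, M i j ≤ ‖M‖ := by
  calc ∑ j, M i j = ((∑ j, ‖M i j‖₊ : ℝ≥0) : ℝ) := by
        push_cast
        simp only [Real.norm_of_nonneg (hM i _)]
    _ ≤ ‖M‖ := by
        rw [linfty_opNorm_def]
        exact_mod_cast Finset.le_sup (f := fun i => ∑ j, ‖M i j‖₊) (Finset.mem_univ i)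

theorem linfty_opNorm_le_of_sum_le [Nonempty m] {M : Matrix m n ℝ} (hM : ∀ i j, 0 ≤ M i j)
    {s : ℝ} (h : ∀ i, ∑ j, M i j ≤ s) : ‖M‖ ≤ s := by
  have hs : 0 ≤ s := (Finset.sum_nonneg fun j _ => hM _ j).trans (h (Classical.arbitrary m))
  rw [linfty_opNorm_def, ← Real.coe_toNNReal s hs, NNReal.coe_le_coe]
  refine Finset.sup_le fun i _ => ?_
  rw [← NNReal.coe_le_coe, Real.coe_toNNReal s hs]
  push_cast
  simpa only [coe_nnnorm, Real.norm_of_nonneg (hM i _)] using h i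

end Norm

variable {ι : Type*} [Fintype ι] [DecidableEq ι]

theorem pow_linfty_opNorm_pow_one_div_tendsto_spectralRadius (M : Matrix ι ι ℝ) :
    Tendsto (fun k : ℕ => ENNReal.ofReal (‖M ^ k‖ ^ (1 / k : ℝ))) atTop
      (𝓝 (spectralRadius ℂ (M.map Complex.ofReal))) := by
  refine (spectrum.pow_norm_pow_one_div_tendsto_nhds_spectralRadius _).congr fun k => ?_
  have hk : (M ^ k).map Complex.ofReal = M.map Complex.ofReal ^ k :=
    Matrix.map_pow M Complex.ofRealHom k
  rw [← hk, linfty_opNorm_map_ofReal]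

theorem spectralRadius_map_ofReal_le_of_le {M N : Matrix ι ι ℝ} (hM : ∀ i j, 0 ≤ M i j)
    (h : ∀ i j, M i j ≤ N i j) :
    spectralRadius ℂ (M.map Complex.ofReal) ≤ spectralRadius ℂ (N.map Complex.ofReal) :=
  le_of_tendsto_of_tendsto' (pow_linfty_opNorm_pow_one_div_tendsto_spectralRadius M)
    (pow_linfty_opNorm_pow_one_div_tendsto_spectralRadius N) fun k =>
      ENNReal.ofReal_le_ofReal <| Real.rpow_le_rpow (norm_nonneg _)
        (linfty_opNorm_le_of_le (pow_apply_nonneg hM k) (pow_apply_le_pow_apply hM h k))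
        (by positivity)

variable [Nonempty ι]

theorem spectralRadius_map_ofReal_le_ofReal {M : Matrix ι ι ℝ} (hM : ∀ i j, 0 ≤ M i j) {s : ℝ}
    (h : ∀ i, ∑ j, M i j ≤ s) : spectralRadius ℂ (M.map Complex.ofReal) ≤ ENNReal.ofReal s :=
  calc spectralRadius ℂ (M.map Complex.ofReal) ≤ ‖M.map Complex.ofReal‖ₑ :=
        spectrum.spectralRadius_le_nnnorm _
    _ = ENNReal.ofReal ‖M‖ := by rw [← ofReal_norm, linfty_opNorm_map_ofReal]
    _ ≤ ENNReal.ofReal s := ENNReal.ofReal_le_ofReal (linfty_opNorm_le_of_sum_le hM h)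

theorem spectralRadius_map_ofReal_ne_top (M : Matrix ι ι ℝ) :
    spectralRadius ℂ (M.map Complex.ofReal) ≠ ⊤ :=
  ((spectrum.spectralRadius_le_nnnorm _).trans_lt ENNReal.coe_lt_top).ne

theorem ofReal_le_spectralRadius_map_ofReal {M : Matrix ι ι ℝ} (hM : ∀ i j, 0 ≤ M i j) {r : ℝ}
    (h : ∀ i, r ≤ ∑ j, M i j) : ENNReal.ofReal r ≤ spectralRadius ℂ (M.map Complex.ofReal) := by
  rcases lt_or_ge r 0 with hr | hr
  · simp [ENNReal.ofReal_of_nonpos hr.le]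
  refine ge_of_tendsto (pow_linfty_opNorm_pow_one_div_tendsto_spectralRadius M)
    ((eventually_ne_atTop 0).mono fun k hk => ENNReal.ofReal_le_ofReal ?_)
  let i : ι := Classical.arbitrary ι
  calc r = (r ^ k) ^ (1 / k : ℝ) := by rw [one_div, Real.pow_rpow_inv_natCast hr hk]
    _ ≤ ‖M ^ k‖ ^ (1 / k : ℝ) := Real.rpow_le_rpow (pow_nonneg hr k)
        ((pow_le_sum_pow_apply hM hr h k i).trans (sum_le_linfty_opNorm (pow_apply_nonneg hM k) i))
        (by positivity)

theorem spectralRadius_map_ofReal_smul {t : ℝ} (ht : 0 ≤ t) (M : Matrix ι ι ℝ) :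
    spectralRadius ℂ ((t • M).map Complex.ofReal) =
      ENNReal.ofReal t * spectralRadius ℂ (M.map Complex.ofReal) := by
  have hmap : (t • M).map Complex.ofReal = (t : ℂ) • M.map Complex.ofReal := by
    ext i j
    simp
  rw [hmap, spectrum.spectralRadius_smul, Complex.nnnorm_real, Real.nnnorm_of_nonneg ht,
    ENNReal.ofReal, Real.toNNReal_of_nonneg ht]

theorem spectralRadius_map_ofReal_pos {M : Matrix ι ι ℝ} (hM : ∀ i j, 0 < M i j) :
    0 < spectralRadius ℂ (M.map Complex.ofReal) := by
  obtain ⟨i, hi⟩ := Finite.exists_min fun i => ∑ j, M i j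
  exact (ENNReal.ofReal_pos.2 (Finset.sum_pos (fun j _ => hM i j) Finset.univ_nonempty)).trans_le
    (ofReal_le_spectralRadius_map_ofReal (fun i j => (hM i j).le) hi)

theorem ofReal_mul_spectralRadius_map_ofReal_le {M N : Matrix ι ι ℝ} (hM : ∀ i j, 0 ≤ M i j)
    {t : ℝ} (ht : 0 ≤ t) (h : ∀ i j, t * M i j ≤ N i j) :
    ENNReal.ofReal t * spectralRadius ℂ (M.map Complex.ofReal) ≤
      spectralRadius ℂ (N.map Complex.ofReal) := by
  rw [← spectralRadius_map_ofReal_smul ht]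
  exact spectralRadius_map_ofReal_le_of_le (fun i j => mul_nonneg ht (hM i j)) h

theorem spectralRadius_map_ofReal_le_ofReal_mul {M N : Matrix ι ι ℝ} (hN : ∀ i j, 0 ≤ N i j)
    {t : ℝ} (ht : 0 ≤ t) (h : ∀ i j, N i j ≤ t * M i j) :
    spectralRadius ℂ (N.map Complex.ofReal) ≤
      ENNReal.ofReal t * spectralRadius ℂ (M.map Complex.ofReal) := by
  rw [← spectralRadius_map_ofReal_smul ht]
  exact spectralRadius_map_ofReal_le_of_le hN h

theorem spectralRadius_map_ofReal_lt_of_lt {M N : Matrix ι ι ℝ} (hM : ∀ i j, 0 ≤ M i j)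
    (h : ∀ i j, M i j < N i j) :
    spectralRadius ℂ (M.map Complex.ofReal) < spectralRadius ℂ (N.map Complex.ofReal) := by
  obtain ⟨t, ht, htMN⟩ := exists_one_lt_mul_le h
  rcases eq_or_ne (spectralRadius ℂ (M.map Complex.ofReal)) 0 with h0 | h0
  · exact h0 ▸ spectralRadius_map_ofReal_pos fun i j => (hM i j).trans_lt (h i j)
  calc spectralRadius ℂ (M.map Complex.ofReal)
      = 1 * spectralRadius ℂ (M.map Complex.ofReal) := (one_mul _).symm
    _ < ENNReal.ofReal t * spectralRadius ℂ (M.map Complex.ofReal) :=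
        ENNReal.mul_lt_mul_left h0 (spectralRadius_map_ofReal_ne_top M) (ENNReal.one_lt_ofReal.2 ht)
    _ ≤ spectralRadius ℂ (N.map Complex.ofReal) :=
        ofReal_mul_spectralRadius_map_ofReal_le hM (by linarith) htMN

theorem tendsto_spectralRadius_map_ofReal {X : Type*} {l : Filter X} {N : X → Matrix ι ι ℝ}
    {M : Matrix ι ι ℝ} (hM : ∀ i j, 0 < M i j)
    (hN : ∀ i j, Tendsto (fun x => N x i j) l (𝓝 (M i j))) :
    Tendsto (fun x => spectralRadius ℂ ((N x).map Complex.ofReal)) l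
      (𝓝 (spectralRadius ℂ (M.map Complex.ofReal))) := by
  have hscale : Tendsto (fun t : ℝ => ENNReal.ofReal t * spectralRadius ℂ (M.map Complex.ofReal))
      (𝓝 1) (𝓝 (spectralRadius ℂ (M.map Complex.ofReal))) := by
    simpa using ENNReal.Tendsto.mul_const (ENNReal.tendsto_ofReal (tendsto_id (x := 𝓝 (1 : ℝ))))
      (Or.inr (spectralRadius_map_ofReal_ne_top M))
  refine tendsto_order.2 ⟨fun a ha => ?_, fun b hb => ?_⟩
  · obtain ⟨t, hat, ht⟩ := ((hscale.eventually (lt_mem_nhds ha)).filter_mono nhdsWithin_le_nhds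
      |>.and (Ioo_mem_nhdsLT zero_lt_one)).exists
    have hbelow : ∀ᶠ x in l, ∀ i j, t * M i j ≤ N x i j :=
      eventually_all.2 fun i => eventually_all.2 fun j => ((hN i j).eventually
        (lt_mem_nhds (mul_lt_of_lt_one_left (hM i j) ht.2))).mono fun _ => le_of_lt
    filter_upwards [hbelow] with x hx
    exact hat.trans_le (ofReal_mul_spectralRadius_map_ofReal_le (fun i j => (hM i j).le) ht.1.le hx)
  · obtain ⟨t, htb, ht⟩ := ((hscale.eventually (gt_mem_nhds hb)).filter_mono nhdsWithin_le_nhds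
      |>.and (self_mem_nhdsWithin : ∀ᶠ t in 𝓝[>] (1 : ℝ), 1 < t)).exists
    have habove : ∀ᶠ x in l, ∀ i j, N x i j ∈ Set.Ioo 0 (t * M i j) :=
      eventually_all.2 fun i => eventually_all.2 fun j => (hN i j).eventually
        (Ioo_mem_nhds (hM i j) (lt_mul_of_one_lt_left (hM i j) ht))
    filter_upwards [habove] with x hx
    exact (spectralRadius_map_ofReal_le_ofReal_mul (fun i j => (hx i j).1.le) (by linarith)
      fun i j => (hx i j).2.le).trans_lt htb

theorem exists_spectralRadius_map_ofReal_lt_one {X : Type*} {l : Filter X} [l.NeBot]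
    {A : X → Matrix ι ι ℝ} (hA : ∀ x i j, 0 ≤ A x i j)
    (h : ∀ i, Tendsto (fun x => ∑ j, A x i j) l (𝓝 0)) :
    ∃ x, spectralRadius ℂ ((A x).map Complex.ofReal) < 1 := by
  obtain ⟨x, hx⟩ := (eventually_all.2 fun i => (h i).eventually (gt_mem_nhds one_half_pos)).exists
  refine ⟨x, (spectralRadius_map_ofReal_le_ofReal (hA x) fun i => (hx i).le).trans_lt ?_⟩
  norm_num

theorem exists_one_lt_spectralRadius_map_ofReal {X : Type*} {l : Filter X} [l.NeBot]
    {A : X → Matrix ι ι ℝ} (hA : ∀ x i j, 0 ≤ A x i j)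
    (h : ∀ i, Tendsto (fun x => ∑ j, A x i j) l atTop) :
    ∃ x, 1 < spectralRadius ℂ ((A x).map Complex.ofReal) := by
  obtain ⟨x, hx⟩ := (eventually_all.2 fun i => (h i).eventually_ge_atTop 2).exists
  refine ⟨x, lt_of_lt_of_le ?_ (ofReal_le_spectralRadius_map_ofReal (hA x) hx)⟩
  norm_num

end LinftyOp

end Matrix

section

attribute [local instance] Matrix.linftyOpNormedRing Matrix.linftyOpNormedAlgebra

theorem specRad_eq_toReal_spectralRadius {n : ℕ} [NeZero n] (M : Matrix (Fin n) (Fin n) ℝ) :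
    specRad M = (spectralRadius ℂ (M.map Complex.ofReal)).toReal := by
  obtain ⟨k, hk, hρ⟩ := spectrum.exists_nnnorm_eq_spectralRadius_of_nonempty
    (spectrum.nonempty (M.map Complex.ofReal))
  have hmax : IsGreatest ((fun z : ℂ => ‖z‖) '' spectrum ℂ (M.map Complex.ofReal)) ‖k‖ := by
    refine ⟨Set.mem_image_of_mem _ hk, Set.forall_mem_image.2 fun z hz => ?_⟩
    have : (‖z‖₊ : ℝ≥0∞) ≤ ‖k‖₊ := hρ ▸ le_iSup₂ (α := ℝ≥0∞) z hz
    exact_mod_cast this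
  rw [specRad, hmax.csSup_eq, ← hρ, ENNReal.coe_toReal, coe_nnnorm]

end

theorem stmt_12_general {n : ℕ} (hn : 0 < n) (A : ℝ → Matrix (Fin n) (Fin n) ℝ)
    (hnonneg : ∀ α i j, 0 ≤ A α i j)
    (hcont : ∀ i j, Continuous (fun α => A α i j))
    (hmono : ∀ i j, StrictMono (fun α => A α i j))
    (hrow0 : ∀ i, Filter.Tendsto (fun α => ∑ j, A α i j) Filter.atBot (nhds 0))
    (hrowTop : ∀ i, Filter.Tendsto (fun α => ∑ j, A α i j) Filter.atTop Filter.atTop) :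
    ∃! α : ℝ, specRad (A α) = 1 := by
  have := NeZero.of_pos hn
  set ρA : ℝ → ℝ≥0∞ := fun α => spectralRadius ℂ ((A α).map Complex.ofReal)
  have hpos : ∀ α i j, 0 < A α i j := fun α i j =>
    (hnonneg (α - 1) i j).trans_lt (hmono i j (sub_one_lt α))
  have hstrict : StrictMono ρA := fun a b hab =>
    Matrix.spectralRadius_map_ofReal_lt_of_lt (hnonneg a) fun i j => hmono i j hab
  have hcontρ : Continuous ρA := continuous_iff_continuousAt.2 fun α =>
    Matrix.tendsto_spectralRadius_map_ofReal (hpos α) fun i j => (hcont i j).continuousAt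
  obtain ⟨a, ha⟩ := Matrix.exists_spectralRadius_map_ofReal_lt_one hnonneg hrow0
  obtain ⟨b, hb⟩ := Matrix.exists_one_lt_spectralRadius_map_ofReal hnonneg hrowTop
  obtain ⟨α, -, hα⟩ := intermediate_value_Icc (hstrict.lt_iff_lt.1 (ha.trans hb)).le
    hcontρ.continuousOn ⟨ha.le, hb.le⟩
  have hiff : ∀ β, specRad (A β) = 1 ↔ ρA β = 1 := fun β => by
    rw [specRad_eq_toReal_spectralRadius, ENNReal.toReal_eq_one_iff]
  exact ⟨α, (hiff α).2 hα, fun β hβ => hstrict.injective (((hiff β).1 hβ).trans hα.symm)⟩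

theorem stmt_12 {n : ℕ} (hn : 0 < n) (A : ℝ → Matrix (Fin n) (Fin n) ℝ)
    (hnonneg : ∀ α i j, 0 ≤ A α i j)
    (hcont : ∀ i j, Continuous (fun α => A α i j))
    (hmono : ∀ i j, StrictMono (fun α => A α i j))
    (hrow0 : ∀ i, Filter.Tendsto (fun α => ∑ j, A α i j) Filter.atBot (nhds 0))
    (hrowTop : ∀ i, Filter.Tendsto (fun α => ∑ j, A α i j) Filter.atTop Filter.atTop)
    (hirr : ∀ α, MatIrreducible (A α)) :
    ∃! α : ℝ, specRad (A α) = 1 :=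
  stmt_12_general hn A hnonneg hcont hmono hrow0 hrowTop
end
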